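/- The trace norm of the difference of the average states satisfies ‖ρ̄_sep − ρ̄_ent‖₁ = 1 − 1/d. -/

import Mathlib

open Kronecker
open scoped Matrix ComplexOrder

/-- The swap operator on two copies of a `d`-dimensional space. -/
noncomputable def swapOp (d : ℕ) : Matrix (Fin d × Fin d) (Fin d × Fin d) ℂ :=
  fun p q => if p.1 = q.2 ∧ p.2 = q.1 then 1 else 0

/-- Projector onto the symmetric subspace of `H ⊗ H`. -/
noncomputable def Pplus (d : ℕ) : Matrix (Fin d × Fin d) (Fin d × Fin d) ℂ :=
  ((1 : ℂ)/2) • (1 + swapOp d)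

/-- Projector onto the antisymmetric subspace of `H ⊗ H`. -/
noncomputable def Pminus (d : ℕ) : Matrix (Fin d × Fin d) (Fin d × Fin d) ℂ :=
  ((1 : ℂ)/2) • (1 - swapOp d)

/-- The average two-copy separable state `ρ̄_sep = (P₊ ⊗ P₊)/d₊²`, `d₊ = d(d+1)/2`,
with system ordering `A₁ A₂ B₁ B₂`. -/
noncomputable def rhoSep (d : ℕ) :
    Matrix ((Fin d × Fin d) × (Fin d × Fin d)) ((Fin d × Fin d) × (Fin d × Fin d)) ℂ :=
  (((d : ℂ) * (d + 1) / 2) ^ 2)⁻¹ • (Pplus d ⊗ₖ Pplus d)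

/-- The average two-copy maximally entangled state
`ρ̄_ent = (1/d²)(P₊⊗P₊/d₊ + P₋⊗P₋/d₋)`, `d₊ = d(d±1)/2`. -/
noncomputable def rhoEnt (d : ℕ) :
    Matrix ((Fin d × Fin d) × (Fin d × Fin d)) ((Fin d × Fin d) × (Fin d × Fin d)) ℂ :=
  ((d : ℂ) ^ 2)⁻¹ •
    (((d : ℂ) * (d + 1) / 2)⁻¹ • (Pplus d ⊗ₖ Pplus d) +
     ((d : ℂ) * (d - 1) / 2)⁻¹ • (Pminus d ⊗ₖ Pminus d))

/-- The trace (nuclear) norm of a complex matrix: `‖A‖₁ = Tr √(Aᴴ A)`. -/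
noncomputable def traceNorm {n : Type*} [Fintype n] [DecidableEq n]
    (A : Matrix n n ℂ) : ℝ :=
  (((Matrix.posSemidef_conjTranspose_mul_self A).1.eigenvectorUnitary.1 *
      Matrix.diagonal (((↑) : ℝ → ℂ) ∘ Real.sqrt ∘ (Matrix.posSemidef_conjTranspose_mul_self A).1.eigenvalues) *
      (star (Matrix.posSemidef_conjTranspose_mul_self A).1.eigenvectorUnitary : Matrix n n ℂ)).trace).re

/-!
`P₊ = (1 + S)/2` for the swap `S`, a self-adjoint involution, so `P₊` is an orthogonal projection
and `P₋ = 1 − P₊` is the complementary one. Hence `Π₊ = P₊ ⊗ P₊` and `Π₋ = P₋ ⊗ P₋` are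
orthogonal projections with `Π₊ Π₋ = 0`, and `ρ̄_sep − ρ̄_ent = a Π₊ − b Π₋` with `a, b ≥ 0`.
Its absolute value is then `a Π₊ + b Π₋`, whose trace `a d₊² + b d₋²` equals `1 − 1/d`.
-/

open scoped MatrixOrder

section TraceNorm

variable {n : Type*} [Fintype n] [DecidableEq n]

lemma traceNorm_eq_re_trace_sqrt (A : Matrix n n ℂ) :
    traceNorm A = (CFC.sqrt (Aᴴ * A)).trace.re := by
  have hA := Matrix.posSemidef_conjTranspose_mul_self A
  rw [traceNorm, CFC.sqrt_eq_real_sqrt _ hA.nonneg, cfcₙ_eq_cfc, hA.1.cfc_eq,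
    Matrix.IsHermitian.cfc]
  simp [Unitary.conjStarAlgAut_apply]

lemma traceNorm_eq_re_trace_of_mul_self_eq {A N : Matrix n n ℂ} (hN : N.PosSemidef)
    (h : N * N = Aᴴ * A) : traceNorm A = N.trace.re := by
  rw [traceNorm_eq_re_trace_sqrt, ← h, CFC.sqrt_mul_self N hN.nonneg]

/-- `a P - b Q` and `a P + b Q` have the same square `a² P + b² Q`, and the latter is positive. -/
lemma traceNorm_smul_sub_smul {P Q : Matrix n n ℂ} (hP : IsStarProjection P)
    (hQ : IsStarProjection Q) (hPQ : P * Q = 0) {a b : ℝ} (ha : 0 ≤ a) (hb : 0 ≤ b) :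
    traceNorm ((a : ℂ) • P - (b : ℂ) • Q) = a * P.trace.re + b * Q.trace.re := by
  have hQP : Q * P = 0 := by
    simpa [hP.isSelfAdjoint.star_eq, hQ.isSelfAdjoint.star_eq] using congr_arg star hPQ
  have hpos : ((a : ℂ) • P + (b : ℂ) • Q).PosSemidef :=
    ((Matrix.nonneg_iff_posSemidef.mp hP.nonneg).smul (by exact_mod_cast ha)).add
      ((Matrix.nonneg_iff_posSemidef.mp hQ.nonneg).smul (by exact_mod_cast hb))
  rw [traceNorm_eq_re_trace_of_mul_self_eq hpos]
  · simp [Matrix.trace_add, Matrix.trace_smul]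
  · rw [← Matrix.star_eq_conjTranspose, star_sub, star_smul, star_smul,
      Complex.star_def, Complex.conj_ofReal, Complex.conj_ofReal, hP.isSelfAdjoint.star_eq,
      hQ.isSelfAdjoint.star_eq]
    simp only [add_mul, mul_add, sub_mul, mul_sub, Matrix.smul_mul, Matrix.mul_smul,
      hP.isIdempotentElem.eq, hQ.isIdempotentElem.eq, hPQ, hQP, smul_zero]
    module

end TraceNorm

lemma isStarProjection_half_smul_one_add {R : Type*} [Ring R] [StarRing R] [Algebra ℂ R]
    [StarModule ℂ R] {s : R} (hs : IsSelfAdjoint s) (hss : s * s = 1) :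
    IsStarProjection ((1 / 2 : ℂ) • (1 + s)) where
  isIdempotentElem := by
    simp only [IsIdempotentElem, smul_mul_smul_comm, add_mul, mul_add, one_mul, mul_one, hss]
    module
  isSelfAdjoint := by
    simp [IsSelfAdjoint, star_smul, hs.star_eq]

lemma IsStarProjection.kronecker {R m n : Type*} [CommRing R] [StarRing R] [Fintype m]
    [Fintype n] {P : Matrix m m R} {Q : Matrix n n R} (hP : IsStarProjection P)
    (hQ : IsStarProjection Q) : IsStarProjection (P ⊗ₖ Q) where
  isIdempotentElem := by
    rw [IsIdempotentElem, ← Matrix.mul_kronecker_mul, hP.isIdempotentElem.eq,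
      hQ.isIdempotentElem.eq]
  isSelfAdjoint := by
    rw [IsSelfAdjoint, Matrix.star_eq_conjTranspose, Matrix.conjTranspose_kronecker,
      ← Matrix.star_eq_conjTranspose, ← Matrix.star_eq_conjTranspose, hP.isSelfAdjoint.star_eq,
      hQ.isSelfAdjoint.star_eq]

section Swap

variable (d : ℕ)

lemma isSelfAdjoint_swapOp : IsSelfAdjoint (swapOp d) := by
  ext p q
  simp only [Matrix.star_apply, swapOp, eq_comm (a := p.1), eq_comm (a := p.2), and_comm]
  split_ifs <;> simp

lemma swapOp_mul_self : swapOp d * swapOp d = 1 := by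
  ext p q
  rw [Matrix.mul_apply, Finset.sum_eq_single (p.2, p.1)]
  · simp [swapOp, Matrix.one_apply, Prod.ext_iff, and_comm]
  · rintro r - hr
    have : ¬(p.1 = r.2 ∧ p.2 = r.1) := fun h => hr (Prod.ext h.2.symm h.1.symm)
    simp [swapOp, this]
  · simp

lemma trace_swapOp : (swapOp d).trace = d := by
  have hdiag (p : Fin d × Fin d) : (p.1 = p.2 ∧ p.2 = p.1) ↔ p.1 = p.2 :=
    and_iff_left_of_imp Eq.symm
  simp only [Matrix.trace, Matrix.diag_apply, swapOp, hdiag]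
  rw [Fintype.sum_prod_type]
  simp

lemma isStarProjection_Pplus : IsStarProjection (Pplus d) :=
  isStarProjection_half_smul_one_add (isSelfAdjoint_swapOp d) (swapOp_mul_self d)

lemma Pminus_eq_one_sub_Pplus : Pminus d = 1 - Pplus d := by
  rw [Pminus, Pplus]
  module

lemma isStarProjection_Pminus : IsStarProjection (Pminus d) := by
  rw [Pminus_eq_one_sub_Pplus]
  exact (isStarProjection_Pplus d).one_sub

lemma Pplus_mul_Pminus : Pplus d * Pminus d = 0 := by
  rw [Pminus_eq_one_sub_Pplus]
  exact (isStarProjection_Pplus d).mul_one_sub_self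

lemma trace_Pplus : (Pplus d).trace = d * (d + 1) / 2 := by
  simp only [Pplus, Matrix.trace_smul, Matrix.trace_add, Matrix.trace_one, trace_swapOp,
    Fintype.card_prod, Fintype.card_fin, smul_eq_mul]
  push_cast
  ring

lemma trace_Pminus : (Pminus d).trace = d * (d - 1) / 2 := by
  simp only [Pminus, Matrix.trace_smul, Matrix.trace_sub, Matrix.trace_one, trace_swapOp,
    Fintype.card_prod, Fintype.card_fin, smul_eq_mul]
  push_cast
  ring

/-- The coefficients are `1/d₊² − 1/(d² d₊)` and `1/(d² d₋)`. -/
lemma rhoSep_sub_rhoEnt (hd : 1 < d) :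
    rhoSep d - rhoEnt d =
      ((2 * (d - 1) / (d ^ 3 * (d + 1) ^ 2) : ℝ) : ℂ) • (Pplus d ⊗ₖ Pplus d) -
        ((2 / (d ^ 3 * (d - 1)) : ℝ) : ℂ) • (Pminus d ⊗ₖ Pminus d) := by
  have hd₀ : (d : ℂ) ≠ 0 := by norm_cast; omega
  have hd₁ : (d : ℂ) - 1 ≠ 0 := sub_ne_zero.mpr (by norm_cast; omega)
  have hd₂ : (d : ℂ) + 1 ≠ 0 := by norm_cast
  rw [rhoSep, rhoEnt]
  match_scalars
  · field_simp
    ring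
  · field_simp

end Swap

/-- Trace norm of the difference of the average states: `‖ρ̄_sep − ρ̄_ent‖₁ = 1 − 1/d`. -/
theorem traceNorm_rhoSep_sub_rhoEnt (d : ℕ) (hd : 2 ≤ d) :
    traceNorm (rhoSep d - rhoEnt d) = 1 - 1 / (d : ℝ) := by
  have hd' : (1 : ℝ) < d := by exact_mod_cast hd
  have horth : (Pplus d ⊗ₖ Pplus d) * (Pminus d ⊗ₖ Pminus d) = 0 := by
    rw [← Matrix.mul_kronecker_mul, Pplus_mul_Pminus, Matrix.zero_kronecker]
  rw [rhoSep_sub_rhoEnt d hd,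
    traceNorm_smul_sub_smul ((isStarProjection_Pplus d).kronecker (isStarProjection_Pplus d))
      ((isStarProjection_Pminus d).kronecker (isStarProjection_Pminus d)) horth
      (div_nonneg (by linarith) (by positivity))
      (div_nonneg zero_le_two (mul_nonneg (by positivity) (by linarith))),
    Matrix.trace_kronecker, Matrix.trace_kronecker, trace_Pplus, trace_Pminus]
  have hd₀ : (d : ℝ) ≠ 0 := by positivity
  have hd₁ : (d : ℝ) - 1 ≠ 0 := by linarith
  simp only [← Complex.ofReal_natCast, ← Complex.ofReal_one, ← Complex.ofReal_ofNat,
    ← Complex.ofReal_add, ← Complex.ofReal_sub, ← Complex.ofReal_mul, ← Complex.ofReal_div,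
    Complex.ofReal_re]
  field_simp
  ring
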